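/- There is an absolute constant C such that for all integers h, u with 2 ≤ h < u, the number of pairs (m, n) of integers with u < m, n ≤ u+h and mn a perfect square is at most C·h·log h. -/
import Mathlib

open Finset

lemma sqfree_decomp (m : ℕ) (hm : 0 < m) :
    ∃ q a : ℕ, Squarefree q ∧ a ^ 2 * q = m ∧
      ∀ n : ℕ, IsSquare (m * n) → ∃ b, n = q * b ^ 2 := by
  obtain ⟨q, a, hqa, hq⟩ := Nat.sq_mul_squarefree m
  refine ⟨q, a, hq, hqa, ?_⟩
  have ha : a ≠ 0 := by rintro rfl; simp at hqa; omega
  intro n ⟨y, hy⟩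
  have hyy : a ^ 2 * (q * n) = y ^ 2 := by rw [sq y, ← hy, ← hqa]; ring
  have hdvd : a ∣ y := (Nat.pow_dvd_pow_iff two_ne_zero).mp ⟨q * n, hyy.symm⟩
  obtain ⟨z, rfl⟩ := hdvd
  have hz : q * n = z ^ 2 := by
    have h2 : a ^ 2 * (q * n) = a ^ 2 * z ^ 2 := by rw [hyy]; ring
    exact Nat.eq_of_mul_eq_mul_left (by positivity) h2
  have hqz : q ∣ z := (hq.dvd_pow_iff_dvd two_ne_zero).mp ⟨n, hz.symm⟩
  obtain ⟨w, rfl⟩ := hqz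
  have hq0 : 0 < q := hq.ne_zero.bot_lt
  refine ⟨w, Nat.eq_of_mul_eq_mul_left hq0 ?_⟩
  rw [hz]; ring

lemma count_bound (u h m : ℕ) (hm : m ∈ Finset.Ioc u (u + h)) :
    ∃ a c : ℕ, 1 ≤ a ∧ a ^ 2 ∣ m ∧
      ((Finset.Ioc u (u + h)).filter (fun n => IsSquare (m * n))).card ≤ c + 1 ∧
      2 * u * c ≤ h * a := by
  have hm' := Finset.mem_Ioc.mp hm
  have hm0 : 0 < m := lt_of_le_of_lt (Nat.zero_le u) hm'.1
  obtain ⟨q, a, hq, hqa, hsq⟩ := sqfree_decomp m hm0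
  have hq0 : 0 < q := hq.ne_zero.bot_lt
  have ha0 : 0 < a := by
    rcases Nat.eq_zero_or_pos a with rfl | h
    · simp at hqa; omega
    · exact h
  set B := (Finset.Icc 1 (u + h)).filter (fun b => q * b ^ 2 ∈ Finset.Ioc u (u + h)) with hB
  have hmem : ∀ b, b ∈ B ↔ (1 ≤ b ∧ b ≤ u + h ∧ u < q * b ^ 2 ∧ q * b ^ 2 ≤ u + h) := by
    intro b
    simp only [hB, Finset.mem_filter, Finset.mem_Icc, Finset.mem_Ioc]
    tauto
  have hmI : q * a ^ 2 = m := by rw [← hqa]; ring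
  have haB : a ∈ B := by
    rw [hmem]
    refine ⟨ha0, ?_, by rw [hmI]; exact hm'.1, by rw [hmI]; exact hm'.2⟩
    have h1 : a ≤ a ^ 2 := Nat.le_self_pow two_ne_zero a
    have h2 : a ^ 2 ≤ q * a ^ 2 := Nat.le_mul_of_pos_left _ hq0
    omega
  have hne : B.Nonempty := ⟨a, haB⟩
  set b0 := B.min' hne with hb0def
  set b1 := B.max' hne with hb1def
  have hcardB : B.card ≤ b1 - b0 + 1 := by
    have hsub : B ⊆ Finset.Icc b0 b1 := fun b hb =>
      Finset.mem_Icc.mpr ⟨Finset.min'_le _ _ hb, Finset.le_max' _ _ hb⟩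
    calc B.card ≤ (Finset.Icc b0 b1).card := Finset.card_le_card hsub
      _ = b1 + 1 - b0 := Nat.card_Icc _ _
      _ ≤ b1 - b0 + 1 := by omega
  have hTB : ((Finset.Ioc u (u + h)).filter (fun n => IsSquare (m * n))).card ≤ B.card := by
    have hsubT : (Finset.Ioc u (u + h)).filter (fun n => IsSquare (m * n))
        ⊆ B.image (fun b => q * b ^ 2) := by
      intro n hn
      rw [Finset.mem_filter] at hn
      have hn1 := Finset.mem_Ioc.mp hn.1
      obtain ⟨b, rfl⟩ := hsq n hn.2
      refine Finset.mem_image.mpr ⟨b, ?_, rfl⟩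
      rw [hmem]
      have hb1 : 0 < b := by
        rcases Nat.eq_zero_or_pos b with rfl | h
        · simp at hn1
        · exact h
      have e1 : b ≤ b ^ 2 := Nat.le_self_pow two_ne_zero b
      have e2 : b ^ 2 ≤ q * b ^ 2 := Nat.le_mul_of_pos_left _ hq0
      exact ⟨hb1, by omega, hn1.1, hn1.2⟩
    calc _ ≤ (B.image (fun b => q * b ^ 2)).card := Finset.card_le_card hsubT
      _ ≤ B.card := Finset.card_image_le
  refine ⟨a, b1 - b0, ha0, ⟨q, hqa.symm⟩, le_trans hTB hcardB, ?_⟩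
  have h0B := (hmem b0).mp (B.min'_mem hne)
  have h1B := (hmem b1).mp (B.max'_mem hne)
  have hb01 : b0 ≤ b1 := B.min'_le _ (B.max'_mem hne)
  have hba : b0 ≤ a := B.min'_le _ haB
  obtain ⟨d, hd⟩ : ∃ d, b1 = b0 + d := ⟨b1 - b0, by omega⟩
  rw [hd] at h1B ⊢
  have hds : b0 + d - b0 = d := by omega
  rw [hds]
  have e1 : q * (b0 + d) ^ 2 = q * b0 ^ 2 + (2 * q * b0 * d + q * d ^ 2) := by ring
  have k5 : 2 * q * b0 * d + 1 ≤ h := by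
    have := h0B.2.2.1
    have := h1B.2.2.2
    omega
  calc 2 * u * d ≤ 2 * (q * b0 ^ 2) * d :=
        Nat.mul_le_mul_right d (by have := h0B.2.2.1; omega)
    _ = (2 * q * b0 * d) * b0 := by ring
    _ ≤ h * b0 := Nat.mul_le_mul_right b0 (by omega)
    _ ≤ h * a := Nat.mul_le_mul_left h hba

lemma divisor_count (u h d : ℕ) (hd : 0 < d) :
    ((Finset.Ioc u (u + h)).filter (fun m => d ∣ m)).card ≤ h / d + 1 := by
  have hdisj : Disjoint ((Finset.Ioc 0 u).filter (fun m => d ∣ m))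
      ((Finset.Ioc u (u + h)).filter (fun m => d ∣ m)) :=
    Finset.disjoint_filter_filter (Finset.disjoint_left.mpr fun x hx1 hx2 => by
      simp only [Finset.mem_Ioc] at hx1 hx2; omega)
  have key : u / d + ((Finset.Ioc u (u + h)).filter (fun m => d ∣ m)).card = (u + h) / d := by
    rw [← Nat.Ioc_filter_dvd_card_eq_div (u + h) d, ← Nat.Ioc_filter_dvd_card_eq_div u d,
      ← Finset.card_union_of_disjoint hdisj, ← Finset.filter_union,
      Finset.Ioc_union_Ioc_eq_Ioc (Nat.zero_le u) le_self_add]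
  have h1 : (u + h) / d = u / d + h / d + (u % d + h % d) / d := by
    conv_lhs => rw [← Nat.div_add_mod u d, ← Nat.div_add_mod h d]
    rw [show d * (u / d) + u % d + (d * (h / d) + h % d)
        = d * (u / d + h / d) + (u % d + h % d) by ring, Nat.mul_add_div hd]
  have h2 : (u % d + h % d) / d ≤ 1 := by
    have hu := Nat.mod_lt u hd
    have hh := Nat.mod_lt h hd
    have hlt : u % d + h % d < 2 * d := by omega
    have := (Nat.div_lt_iff_lt_mul hd).mpr hlt
    omega
  linarith

lemma logkey (h u : ℕ) (hh : 2 ≤ h) (hu : h < u) :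
    (h : ℝ) * Real.log (2 * u) ≤ (u : ℝ) * Real.log (2 * h) := by
  have hh0 : (0:ℝ) < h := by positivity
  have hu0 : (0:ℝ) < u := by exact_mod_cast (show 0 < u by omega)
  have hhu : (h:ℝ) ≤ u := by exact_mod_cast hu.le
  have e : Real.log (2 * (u:ℝ)) = Real.log (2 * h) + Real.log ((u:ℝ) / h) := by
    rw [← Real.log_mul (by positivity) (by positivity)]
    congr 1
    field_simp
  have e2 : Real.log ((u:ℝ) / h) ≤ (u:ℝ) / h - 1 :=
    Real.log_le_sub_one_of_pos (by positivity)
  have p1 : (h:ℝ) * Real.log ((u:ℝ) / h) ≤ (u:ℝ) - h := by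
    have := mul_le_mul_of_nonneg_left e2 hh0.le
    have e3 : (h:ℝ) * ((u:ℝ)/h - 1) = u - h := by field_simp
    linarith
  have e4 : (1:ℝ) ≤ Real.log (2 * h) := by
    have h4 : (4:ℝ) ≤ 2 * h := by
      have : (2:ℝ) ≤ h := by exact_mod_cast hh
      linarith
    have l1 : Real.log 4 ≤ Real.log (2 * h) := Real.log_le_log (by norm_num) h4
    have l2 : Real.log 4 = 2 * Real.log 2 := by
      rw [show (4:ℝ) = 2 ^ 2 by norm_num, Real.log_pow]; push_cast; ring
    nlinarith [Real.log_two_gt_d9]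
  have p2 : (u:ℝ) - h ≤ ((u:ℝ) - h) * Real.log (2 * h) := by
    nlinarith [mul_nonneg (sub_nonneg.mpr hhu) (sub_nonneg.mpr e4)]
  nlinarith [mul_le_mul_of_nonneg_left e2 hh0.le]

set_option maxHeartbeats 1000000 in
theorem stmt_2 :
    ∃ C : ℝ, 0 < C ∧ ∀ h u : ℕ, 2 ≤ h → h < u →
      ((((Finset.Ioc u (u + h)) ×ˢ (Finset.Ioc u (u + h))).filter
          (fun p : ℕ × ℕ => IsSquare (p.1 * p.2))).card : ℝ)
        ≤ C * h * Real.log h := by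
  classical
  refine ⟨10, by norm_num, ?_⟩
  intro h u hh hu
  set I := Finset.Ioc u (u + h) with hI
  have hcardI : I.card = h := by simp [hI]
  -- Step 1 : fiberwise decomposition
  have step1 : ((I ×ˢ I).filter (fun p : ℕ × ℕ => IsSquare (p.1 * p.2))).card
      = ∑ m ∈ I, (I.filter (fun n => IsSquare (m * n))).card := by
    rw [Finset.card_eq_sum_card_fiberwise
      (f := Prod.fst) (t := I)
      (fun p hp => (Finset.mem_product.mp (Finset.mem_filter.mp hp).1).1)]
    refine Finset.sum_congr rfl fun m hm => ?_
    refine Finset.card_bij' (fun p _ => p.2) (fun n _ => (m, n)) ?_ ?_ ?_ ?_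
    · intro p hp
      simp only [Finset.mem_filter, Finset.mem_product] at hp ⊢
      obtain ⟨⟨hp1, hp2⟩, hp3⟩ := hp
      exact ⟨hp1.2, by rw [← hp3]; exact hp2⟩
    · intro n hn
      simp only [Finset.mem_filter, Finset.mem_product] at hn ⊢
      exact ⟨⟨⟨hm, hn.1⟩, hn.2⟩, trivial⟩
    · intro p hp
      simp only [Finset.mem_filter] at hp
      exact Prod.ext hp.2.symm rfl
    · intro n hn; rfl
  -- Step 2 : choose a, c per m
  choose! a c ha1 ha2 hc1 hc2 using fun m hm => count_bound u h m hm
  have step2 : ∑ m ∈ I, (I.filter (fun n => IsSquare (m * n))).card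
      ≤ (∑ m ∈ I, c m) + h := by
    calc ∑ m ∈ I, (I.filter (fun n => IsSquare (m * n))).card
        ≤ ∑ m ∈ I, (c m + 1) := Finset.sum_le_sum hc1
      _ = (∑ m ∈ I, c m) + h := by
          rw [Finset.sum_add_distrib, Finset.sum_const, hcardI, smul_eq_mul, mul_one]
  have step3 : 2 * u * (∑ m ∈ I, c m) ≤ h * ∑ m ∈ I, a m := by
    rw [Finset.mul_sum, Finset.mul_sum]
    exact Finset.sum_le_sum hc2
  -- Step 4 : bound on ∑ a m
  set A := Nat.sqrt (u + h) with hA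
  have hA1 : 1 ≤ A := Nat.le_sqrt.mpr (by omega)
  have hmaps : ∀ m ∈ I, a m ∈ Finset.Icc 1 A := by
    intro m hm
    have h1 := ha1 m hm
    have h2 : (a m) ^ 2 ≤ m := Nat.le_of_dvd (by
      have := (Finset.mem_Ioc.mp hm).1; omega) (ha2 m hm)
    have h3 : m ≤ u + h := (Finset.mem_Ioc.mp hm).2
    exact Finset.mem_Icc.mpr ⟨h1, Nat.le_sqrt.mpr (by nlinarith [sq (a m)])⟩
  set Hn := ∑ v ∈ Finset.Icc 1 A, h / v with hHn
  have step4 : ∑ m ∈ I, a m ≤ Hn + (u + h) := by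
    rw [← Finset.sum_fiberwise_of_maps_to hmaps (fun m => a m)]
    have inner : ∀ v ∈ Finset.Icc 1 A,
        ∑ m ∈ I.filter (fun m => a m = v), a m ≤ h / v + v := by
      intro v hv
      have hv1 : 1 ≤ v := (Finset.mem_Icc.mp hv).1
      have e0 : ∑ m ∈ I.filter (fun m => a m = v), a m
          = v * (I.filter (fun m => a m = v)).card := by
        rw [Finset.sum_congr rfl (fun m hm => (Finset.mem_filter.mp hm).2),
          Finset.sum_const, smul_eq_mul, mul_comm]
      rw [e0]
      have sub : I.filter (fun m => a m = v) ⊆ I.filter (fun m => v ^ 2 ∣ m) := by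
        intro m hm
        rw [Finset.mem_filter] at hm ⊢
        exact ⟨hm.1, hm.2 ▸ ha2 m hm.1⟩
      have e1 : (I.filter (fun m => a m = v)).card ≤ h / v ^ 2 + 1 :=
        le_trans (Finset.card_le_card sub) (divisor_count u h (v ^ 2) (by positivity))
      have e2 : v * (h / v ^ 2) ≤ h / v := by
        rw [show v ^ 2 = v * v by ring, ← Nat.div_div_eq_div_mul, mul_comm]
        exact Nat.div_mul_le_self _ _
      calc v * (I.filter (fun m => a m = v)).card ≤ v * (h / v ^ 2 + 1) :=
            Nat.mul_le_mul_left v e1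
        _ = v * (h / v ^ 2) + v := by ring
        _ ≤ h / v + v := by omega
    calc ∑ v ∈ Finset.Icc 1 A, ∑ m ∈ I.filter (fun m => a m = v), a m
        ≤ ∑ v ∈ Finset.Icc 1 A, (h / v + v) := Finset.sum_le_sum inner
      _ = Hn + ∑ v ∈ Finset.Icc 1 A, v := Finset.sum_add_distrib
      _ ≤ Hn + (u + h) := by
          have hs : ∑ v ∈ Finset.Icc 1 A, v ≤ A * A := by
            calc ∑ v ∈ Finset.Icc 1 A, v ≤ (Finset.Icc 1 A).card * A :=
                Finset.sum_le_card_nsmul _ _ A (fun v hv => (Finset.mem_Icc.mp hv).2)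
              _ = A * A := by rw [Nat.card_Icc, Nat.add_sub_cancel]
          have hAA : A * A ≤ u + h := by
            have := Nat.sqrt_le' (u + h); nlinarith [sq A]
          omega
  -- Nat master inequality
  have natkey : 2 * u * ((I ×ˢ I).filter (fun p : ℕ × ℕ => IsSquare (p.1 * p.2))).card
      ≤ h * (Hn + (u + h)) + 2 * u * h := by
    calc 2 * u * ((I ×ˢ I).filter (fun p : ℕ × ℕ => IsSquare (p.1 * p.2))).card
        = 2 * u * ∑ m ∈ I, (I.filter (fun n => IsSquare (m * n))).card := by rw [step1]
      _ ≤ 2 * u * ((∑ m ∈ I, c m) + h) := Nat.mul_le_mul_left _ step2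
      _ = 2 * u * (∑ m ∈ I, c m) + 2 * u * h := by ring
      _ ≤ h * (∑ m ∈ I, a m) + 2 * u * h := Nat.add_le_add_right step3 _
      _ ≤ h * (Hn + (u + h)) + 2 * u * h :=
          Nat.add_le_add_right (Nat.mul_le_mul_left _ step4) _
  -- pass to reals
  have hh0 : (0:ℝ) < h := by positivity
  have hu0R : (0:ℝ) < u := by exact_mod_cast (show 0 < u by omega)
  have hhu : (h:ℝ) ≤ u := by exact_mod_cast hu.le
  have hHle : (Hn : ℝ) ≤ h * (1 + Real.log A) := by
    have c1 : (Hn : ℝ) ≤ ∑ v ∈ Finset.Icc 1 A, (h:ℝ) / v := by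
      rw [hHn]
      push_cast
      exact Finset.sum_le_sum fun v _ => Nat.cast_div_le
    have c2 : ∑ v ∈ Finset.Icc 1 A, (h:ℝ) / v = h * ((harmonic A : ℚ) : ℝ) := by
      rw [harmonic_eq_sum_Icc]
      push_cast
      rw [Finset.mul_sum]
      exact Finset.sum_congr rfl fun v _ => div_eq_mul_inv _ _
    have c3 : ((harmonic A : ℚ) : ℝ) ≤ 1 + Real.log A := harmonic_le_one_add_log A
    calc (Hn : ℝ) ≤ ∑ v ∈ Finset.Icc 1 A, (h:ℝ) / v := c1
      _ = h * ((harmonic A : ℚ) : ℝ) := c2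
      _ ≤ h * (1 + Real.log A) := mul_le_mul_of_nonneg_left c3 hh0.le
  have hlogA : Real.log A ≤ Real.log (2 * u) / 2 := by
    have h1 : ((A:ℝ)) ^ 2 ≤ 2 * u := by
      have hAA : A ^ 2 ≤ u + h := Nat.sqrt_le' (u + h)
      have h2 : ((A : ℝ)) ^ 2 ≤ ((u + h : ℕ) : ℝ) := by exact_mod_cast hAA
      push_cast at h2
      nlinarith
    have h3 : Real.log ((A:ℝ) ^ 2) ≤ Real.log (2 * u) := Real.log_le_log (by positivity) h1
    rw [Real.log_pow] at h3
    push_cast at h3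
    linarith
  have rkey : 2 * (u:ℝ) * (((I ×ˢ I).filter (fun p : ℕ × ℕ => IsSquare (p.1 * p.2))).card : ℝ)
      ≤ h * ((Hn:ℝ) + ((u:ℝ) + h)) + 2 * u * h := by exact_mod_cast natkey
  set N : ℝ := (((I ×ˢ I).filter (fun p : ℕ × ℕ => IsSquare (p.1 * p.2))).card : ℝ) with hN
  have K1 : 2 * (u:ℝ) * N ≤ h * ((h:ℝ) * (1 + Real.log A)) + h * ((u:ℝ) + h) + 2 * u * h := by
    nlinarith [mul_le_mul_of_nonneg_left hHle hh0.le]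
  have lk := logkey h u hh hu
  have K2 : (h:ℝ) * (1 + Real.log A) ≤ u * (1 + Real.log (2 * h) / 2) := by
    have t1 : (h:ℝ) * Real.log A ≤ h * (Real.log (2 * u) / 2) :=
      mul_le_mul_of_nonneg_left hlogA hh0.le
    nlinarith
  have K3 : (u:ℝ) * (2 * N) ≤ (u:ℝ) * (h * (1 + Real.log (2 * h) / 2) + 4 * h) := by
    have t3 : (h:ℝ) * ((u:ℝ) + h) ≤ 2 * u * h := by nlinarith
    nlinarith [mul_le_mul_of_nonneg_left K2 hh0.le]
  have K4 : 2 * N ≤ h * (1 + Real.log (2 * h) / 2) + 4 * h :=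
    le_of_mul_le_mul_left K3 hu0R
  have hlog2h : Real.log (2 * h) = Real.log 2 + Real.log h := by
    rw [Real.log_mul (by norm_num) (by positivity)]
  have hl2a : (0.6931471803 : ℝ) < Real.log 2 := Real.log_two_gt_d9
  have hl2b : Real.log 2 < 0.6931471808 := Real.log_two_lt_d9
  have hlh : Real.log 2 ≤ Real.log h := by
    apply Real.log_le_log (by norm_num)
    exact_mod_cast hh
  nlinarith [mul_nonneg hh0.le (show (0:ℝ) ≤ Real.log h - 0.6931471803 by nlinarith)]
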